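/- arXiv:2509.02730 — 2 statements merged into one kernel-verified Lean document; each statement's English description precedes it below -/
import Mathlib

section
/- Let D be a probability distribution and U the uniform distribution over a finite set S ⊆ {0,1}^n. If the KL-divergence D(D‖U) < t for some t > 1, then for every α > 2 there exists an event E such that D(E) ≥ 1 - 1/α and the min-entropy of D conditioned on E satisfies H_∞(D|_E) ≥ log|S| - 2αt. -/
open Finset

private lemma aux_pointwise (N q₀ d : ℝ) (hN : 0 < N) (hq₀ : 0 < q₀) (hd : 0 ≤ d) :
    d * Real.logb 2 q₀ + (d - q₀ / N) / Real.log 2 ≤ d * Real.logb 2 (d * N) := by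
  have hL : 0 < Real.log 2 := Real.log_pos (by norm_num)
  rcases eq_or_lt_of_le hd with h0 | h0
  · rw [← h0]
    simp only [zero_mul, zero_sub, zero_add]
    have h1 : 0 < q₀ / N := div_pos hq₀ hN
    have h2 : (0:ℝ) < (q₀ / N) / Real.log 2 := div_pos h1 hL
    rw [neg_div]
    linarith
  · have hdN : 0 < d * N := mul_pos h0 hN
    have hln : Real.log (q₀ / (d * N)) ≤ q₀ / (d * N) - 1 :=
      Real.log_le_sub_one_of_pos (div_pos hq₀ hdN)
    rw [Real.log_div hq₀.ne' hdN.ne'] at hln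
    have hmul := mul_le_mul_of_nonneg_left hln hd
    have heq : d * (q₀ / (d * N)) = q₀ / N := by
      field_simp
    have h3 : d * (q₀ / (d * N) - 1) = q₀ / N - d := by
      rw [mul_sub, heq]; ring
    have key : d * Real.log q₀ + (d - q₀ / N) ≤ d * Real.log (d * N) := by
      rw [mul_sub] at hmul
      linarith
    have e1 : d * Real.logb 2 q₀ + (d - q₀ / N) / Real.log 2
        = (d * Real.log q₀ + (d - q₀ / N)) / Real.log 2 := by
      rw [Real.logb]; ring
    have e2 : d * Real.logb 2 (d * N) = (d * Real.log (d * N)) / Real.log 2 := by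
      rw [Real.logb]; ring
    rw [e1, e2]
    exact (div_le_div_iff_of_pos_right hL).mpr key

/-- If `D` is a distribution on a finite set `S ⊆ {0,1}^n` with KL-divergence to the
uniform distribution on `S` less than `t > 1`, then for every `α > 2` there is an event
`E ⊆ S` with `D(E) ≥ 1 - 1/α` such that the distribution `D` conditioned on `E` has
min-entropy at least `log|S| - 2αt` (i.e. every conditional probability is at most
`2^{-(log|S| - 2αt)}`). -/
theorem stmt1 {n : ℕ} (S : Finset (Fin n → ZMod 2)) (hS : S.Nonempty)
    (D : (Fin n → ZMod 2) → ℝ) (hD0 : ∀ x, 0 ≤ D x)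
    (hsupp : ∀ x ∉ S, D x = 0) (hsum : ∑ x ∈ S, D x = 1)
    (t α : ℝ) (ht : 1 < t) (hα : 2 < α)
    (hKL : ∑ x ∈ S, D x * Real.logb 2 (D x / ((S.card : ℝ)⁻¹)) < t) :
    ∃ E ⊆ S, 1 - 1 / α ≤ ∑ x ∈ E, D x ∧
      ∀ x ∈ E, D x / (∑ y ∈ E, D y) ≤ (2 : ℝ) ^ (-(Real.logb 2 (S.card : ℝ) - 2 * α * t)) := by
  have hL : 0 < Real.log 2 := Real.log_pos (by norm_num)
  have hL2 : (0.6931471803 : ℝ) < Real.log 2 := Real.log_two_gt_d9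
  set N : ℝ := (S.card : ℝ) with hNdef
  have hN : 0 < N := by
    rw [hNdef]
    exact_mod_cast Finset.card_pos.mpr hS
  have hα0 : (0:ℝ) < α := by linarith
  have hiα : 1 / α < 1 / 2 := by
    rw [div_lt_div_iff₀ hα0 (by norm_num)]; linarith
  have hiα0 : 0 < 1 / α := by positivity
  set q₀ : ℝ := 1 - 1 / α with hq₀def
  have hq₀ : 0 < q₀ := by simp only [hq₀def]; linarith
  have hq₀half : (1:ℝ)/2 < q₀ := by simp only [hq₀def]; linarith
  set c : ℝ := -Real.logb 2 q₀ with hcdef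
  have hc1 : c < 1 := by
    have : Real.logb 2 ((1:ℝ)/2) < Real.logb 2 q₀ :=
      Real.logb_lt_logb (by norm_num) (by norm_num) hq₀half
    have h2 : Real.logb 2 ((1:ℝ)/2) = -1 := by
      rw [show (1:ℝ)/2 = 2⁻¹ by norm_num, Real.logb_inv, Real.logb_self_eq_one] <;> norm_num
    rw [hcdef]; linarith
  have hc0 : 0 < c := by
    have hq₀1 : q₀ < 1 := by simp only [hq₀def]; linarith
    have : Real.logb 2 q₀ < Real.logb 2 1 := Real.logb_lt_logb (by norm_num) hq₀ hq₀1
    rw [Real.logb_one] at this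
    rw [hcdef]; linarith
  have hpow : (0:ℝ) < (2:ℝ) ^ (2 * α * t) := Real.rpow_pos_of_pos (by norm_num) _
  set T : ℝ := q₀ * (2:ℝ) ^ (2 * α * t) / N with hTdef
  have hT : 0 < T := by positivity
  set E : Finset (Fin n → ZMod 2) := S.filter (fun x => D x ≤ T) with hEdef
  set B : Finset (Fin n → ZMod 2) := S.filter (fun x => ¬ D x ≤ T) with hBdef
  set q : ℝ := ∑ x ∈ E, D x with hqdef
  set p : ℝ := ∑ x ∈ B, D x with hpdef
  have hsplit : q + p = 1 := by
    rw [hqdef, hpdef, hEdef, hBdef, Finset.sum_filter_add_sum_filter_not, hsum]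
  -- rewrite KL
  have hKL' : ∑ x ∈ S, D x * Real.logb 2 (D x * N) < t := by
    have : ∀ x ∈ S, D x * Real.logb 2 (D x * N) = D x * Real.logb 2 (D x / N⁻¹) := by
      intro x _; rw [div_eq_mul_inv, inv_inv]
    rw [Finset.sum_congr rfl this]
    exact hKL
  have hKLsplit : (∑ x ∈ E, D x * Real.logb 2 (D x * N))
      + (∑ x ∈ B, D x * Real.logb 2 (D x * N)) < t := by
    rw [hEdef, hBdef, Finset.sum_filter_add_sum_filter_not]
    exact hKL'
  -- bound on B part
  have hTN : Real.logb 2 (T * N) = 2 * α * t - c := by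
    have hTN' : T * N = q₀ * (2:ℝ) ^ (2 * α * t) := by
      rw [hTdef, div_mul_cancel₀ _ hN.ne']
    rw [hTN', Real.logb_mul hq₀.ne' hpow.ne',
      Real.logb_rpow (by norm_num : (0:ℝ) < 2) (by norm_num), hcdef]
    ring
  have hBbound : ∑ x ∈ B, D x * (2 * α * t - c) ≤ ∑ x ∈ B, D x * Real.logb 2 (D x * N) := by
    apply Finset.sum_le_sum
    intro x hx
    have hxT : T < D x := by
      simp only [hBdef, Finset.mem_filter] at hx
      exact not_le.mp hx.2
    have : Real.logb 2 (T * N) ≤ Real.logb 2 (D x * N) :=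
      Real.logb_le_logb_of_le (by norm_num) (mul_pos hT hN)
        (mul_le_mul_of_nonneg_right hxT.le hN.le)
    rw [hTN] at this
    exact mul_le_mul_of_nonneg_left this (hD0 x)
  have hBsum : ∑ x ∈ B, D x * (2 * α * t - c) = p * (2 * α * t - c) := by
    rw [hpdef, Finset.sum_mul]
  -- bound on E part
  have hEbound : ∑ x ∈ E, (D x * Real.logb 2 q₀ + (D x - q₀ / N) / Real.log 2)
      ≤ ∑ x ∈ E, D x * Real.logb 2 (D x * N) := by
    apply Finset.sum_le_sum
    intro x _
    exact aux_pointwise N q₀ (D x) hN hq₀ (hD0 x)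
  have hcardE : (E.card : ℝ) ≤ N := by
    rw [hNdef]
    exact_mod_cast Finset.card_le_card (Finset.filter_subset _ _)
  have hEsum : ∑ x ∈ E, (D x * Real.logb 2 q₀ + (D x - q₀ / N) / Real.log 2)
      = q * Real.logb 2 q₀ + (q - E.card * (q₀ / N)) / Real.log 2 := by
    rw [Finset.sum_add_distrib, ← Finset.sum_mul, ← Finset.sum_div, Finset.sum_sub_distrib,
      Finset.sum_const, nsmul_eq_mul, hqdef]
  have hEq' : q * (-c) + (q - q₀) / Real.log 2 ≤ ∑ x ∈ E, D x * Real.logb 2 (D x * N) := by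
    have h1 : (E.card : ℝ) * (q₀ / N) ≤ q₀ := by
      rw [mul_div_assoc']
      rw [div_le_iff₀ hN]
      nlinarith
    have h2 : (q - q₀) / Real.log 2 ≤ (q - E.card * (q₀ / N)) / Real.log 2 := by
      apply (div_le_div_iff_of_pos_right hL).mpr
      linarith
    calc q * (-c) + (q - q₀) / Real.log 2
        ≤ q * Real.logb 2 q₀ + (q - E.card * (q₀ / N)) / Real.log 2 := by
          rw [hcdef]; push_cast; linarith
      _ ≤ _ := by rw [← hEsum]; exact hEbound
  clear_value N q₀ c T q p E B
  -- combine to get the probability bound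
  have hmain : q₀ ≤ q := by
    by_contra hcon
    push_neg at hcon
    have hp : 1 / α < p := by
      have : q₀ = 1 - 1/α := hq₀def
      linarith
    have hchain : p * (2 * α * t - c) + (q * (-c) + (q - q₀) / Real.log 2) < t := by
      calc p * (2 * α * t - c) + (q * (-c) + (q - q₀) / Real.log 2)
          ≤ (∑ x ∈ B, D x * Real.logb 2 (D x * N)) + (∑ x ∈ E, D x * Real.logb 2 (D x * N)) := by
            rw [← hBsum]; linarith [hBbound, hEq']
        _ < t := by linarith [hKLsplit]
    have hq1p : q = 1 - p := by linarith
    have hid : p * (2 * α * t - c) + ((1-p) * (-c) + ((1-p) - (1 - 1/α)) / Real.log 2)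
        = 2 * t - c + (p - 1/α) * (2 * α * t - 1 / Real.log 2) := by
      field_simp
      ring
    have hLlt : 1 / Real.log 2 < 2 := by
      rw [div_lt_iff₀ hL]; linarith
    have hαt : 4 < 2 * α * t := by
      have h1 : (2:ℝ) * 1 < α * t := mul_lt_mul'' hα ht (by norm_num) (by norm_num)
      have h2 : 2 * α * t = 2 * (α * t) := by ring
      rw [h2]; linarith
    have hnn : 0 ≤ (p - 1/α) * (2 * α * t - 1 / Real.log 2) := by
      apply mul_nonneg <;> linarith
    rw [hq1p, hq₀def] at hchain
    rw [hid] at hchain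
    linarith
  refine ⟨E, by rw [hEdef]; exact Finset.filter_subset _ _,
    by rw [← hqdef]; exact hq₀def ▸ hmain, ?_⟩
  intro x hx
  have hxT : D x ≤ T := by
    simp only [hEdef, Finset.mem_filter] at hx
    exact hx.2
  have hR : (2:ℝ) ^ (-(Real.logb 2 N - 2 * α * t)) = (2:ℝ) ^ (2 * α * t) / N := by
    rw [neg_sub, Real.rpow_sub (by norm_num : (0:ℝ) < 2),
      Real.rpow_logb (by norm_num : (0:ℝ) < 2) (by norm_num) hN]
  rw [hR, ← hqdef]
  have hdiv : D x / q ≤ T / q₀ := div_le_div₀ hT.le hxT hq₀ hmain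
  have hTq : T / q₀ = (2:ℝ) ^ (2 * α * t) / N := by
    rw [hTdef]
    field_simp
  linarith [hdiv, hTq]
end

section
/- Let A and B be finitely-supported random variables where B takes at most 2^λ distinct values. Then E_{b∼B}[Σ_a Pr[A=a | B=b]²] ≤ 2^{-H_∞(A) + λ}, i.e., the expected collision probability of A conditioned on B is at most 2^λ times the maximum probability of A. -/
open Finset

/-- `pr μ A a` is the probability that the random variable `A` takes value `a`
under the finite measure `μ`. -/
noncomputable def pr {Ω α : Type*} [Fintype Ω] [DecidableEq α]
    (μ : Ω → ℝ) (A : Ω → α) (a : α) : ℝ :=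
  ∑ ω ∈ Finset.univ.filter (fun ω => A ω = a), μ ω

lemma pr_nonneg {Ω α : Type*} [Fintype Ω] [DecidableEq α]
    (μ : Ω → ℝ) (hμ : ∀ ω, 0 ≤ μ ω) (A : Ω → α) (a : α) : 0 ≤ pr μ A a :=
  Finset.sum_nonneg fun ω _ => hμ ω

lemma pr_sum {Ω α : Type*} [Fintype Ω] [Fintype α] [DecidableEq α]
    (μ : Ω → ℝ) (A : Ω → α) : ∑ a, pr μ A a = ∑ ω, μ ω := by
  simpa [pr] using Finset.sum_fiberwise Finset.univ A μ

lemma pr_pair_sum {Ω α β : Type*} [Fintype Ω] [Fintype α] [DecidableEq α] [DecidableEq β]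
    (μ : Ω → ℝ) (A : Ω → α) (B : Ω → β) (b : β) :
    ∑ a, pr μ (fun ω => (A ω, B ω)) (a, b) = pr μ B b := by
  have : ∀ a, pr μ (fun ω => (A ω, B ω)) (a, b)
      = ∑ ω ∈ (Finset.univ.filter (fun ω => B ω = b)).filter (fun ω => A ω = a), μ ω := by
    intro a
    unfold pr
    congr 1
    ext ω
    simp [Prod.ext_iff, and_comm]
  rw [Finset.sum_congr rfl fun a _ => this a,
    Finset.sum_fiberwise (Finset.univ.filter (fun ω => B ω = b)) A μ]
  rfl

lemma pr_pair_le {Ω α β : Type*} [Fintype Ω] [Fintype α] [DecidableEq α] [DecidableEq β]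
    (μ : Ω → ℝ) (hμ : ∀ ω, 0 ≤ μ ω) (A : Ω → α) (B : Ω → β) (a : α) (b : β) :
    pr μ (fun ω => (A ω, B ω)) (a, b) ≤ pr μ A a := by
  apply Finset.sum_le_sum_of_subset_of_nonneg
  · intro ω hω
    simp only [Finset.mem_filter, Prod.ext_iff] at hω ⊢
    exact ⟨hω.1, hω.2.1⟩
  · intro ω _ _; exact hμ ω

/-- If `B` takes at most `2^l` values, the expected collision probability of `A`
conditioned on `B` is at most `2^{-H_∞(A) + l}`. -/
theorem stmt2 {Ω α β : Type*} [Fintype Ω] [Fintype α] [Fintype β]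
    [DecidableEq α] [DecidableEq β] [Nonempty α]
    (μ : Ω → ℝ) (hμ : ∀ ω, 0 ≤ μ ω) (hsum : ∑ ω, μ ω = 1)
    (A : Ω → α) (B : Ω → β) (l : ℕ) (hB : Fintype.card β ≤ 2 ^ l) :
    ∑ b, pr μ B b * ∑ a, (pr μ (fun ω => (A ω, B ω)) (a, b) / pr μ B b) ^ 2
      ≤ (2 : ℝ) ^
        (-(- Real.logb 2 (Finset.univ.sup' Finset.univ_nonempty (fun a => pr μ A a))) + (l : ℝ)) := by
  set M : ℝ := Finset.univ.sup' Finset.univ_nonempty (fun a => pr μ A a) with hM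
  have hle : ∀ a, pr μ A a ≤ M := fun a => Finset.le_sup' _ (Finset.mem_univ a)
  have hMpos : 0 < M := by
    by_contra h
    push_neg at h
    have h1 : (1 : ℝ) = ∑ a, pr μ A a := by rw [pr_sum μ A, hsum]
    have h2 : ∑ a, pr μ A a ≤ ∑ a : α, (0 : ℝ) :=
      Finset.sum_le_sum fun a _ => (hle a).trans h
    simp at h2
    linarith
  -- RHS = M * 2^l
  have hRHS : (2 : ℝ) ^ (-(- Real.logb 2 M) + (l : ℝ)) = M * 2 ^ (l : ℕ) := by
    rw [neg_neg, Real.rpow_add (by norm_num), Real.rpow_logb (by norm_num) (by norm_num) hMpos,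
      Real.rpow_natCast]
  rw [hRHS]
  -- bound each term by M
  have hterm : ∀ b, pr μ B b * ∑ a, (pr μ (fun ω => (A ω, B ω)) (a, b) / pr μ B b) ^ 2 ≤ M := by
    intro b
    rcases eq_or_lt_of_le (pr_nonneg μ hμ B b) with hq | hq
    · simp [← hq, le_of_lt hMpos]
    · have hq' : pr μ B b ≠ 0 := ne_of_gt hq
      calc pr μ B b * ∑ a, (pr μ (fun ω => (A ω, B ω)) (a, b) / pr μ B b) ^ 2
          = ∑ a, (pr μ (fun ω => (A ω, B ω)) (a, b)) ^ 2 / pr μ B b := by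
            rw [Finset.mul_sum]
            congr 1; ext a; field_simp
        _ ≤ ∑ a, M * pr μ (fun ω => (A ω, B ω)) (a, b) / pr μ B b := by
            apply Finset.sum_le_sum
            intro a _
            gcongr
            rw [sq]
            exact mul_le_mul_of_nonneg_right
              ((pr_pair_le μ hμ A B a b).trans (hle a))
              (pr_nonneg μ hμ (fun ω => (A ω, B ω)) (a, b))
        _ = M := by
            rw [← Finset.sum_div, ← Finset.mul_sum, pr_pair_sum, mul_div_assoc,
              div_self hq', mul_one]
  calc ∑ b, pr μ B b * ∑ a, (pr μ (fun ω => (A ω, B ω)) (a, b) / pr μ B b) ^ 2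
      ≤ ∑ _b : β, M := Finset.sum_le_sum fun b _ => hterm b
    _ = Fintype.card β * M := by rw [Finset.sum_const, nsmul_eq_mul, Fintype.card]
    _ ≤ (2 ^ l : ℕ) * M := by
        apply mul_le_mul_of_nonneg_right _ (le_of_lt hMpos)
        exact_mod_cast hB
    _ = M * 2 ^ l := by push_cast; ring
end
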